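/- Utilitarian PoC upper bound for paths with n ≥ 3 agents: for a path G on m vertices and n ≥ 3 agents, the utilitarian price of connectivity is at most n − 1/(nm). Key steps: if the unconstrained optimal welfare exceeds n − 1/(nm), then every item gives value ≥ 1/(nm) to at most one agent; some item g_j satisfies u_1(g_j) ≥ 1/m and hence u_2(g_j) < 1/(nm); setting r = (n−1)/(2nm), either the prefix sums before g_j or through g_j of u_1 and u_2 differ by at least r, producing a two-interval connected allocation with utilitarian welfare at least 1 + r; finally n/(1+r) ≤ n − 1/(nm) for all n ≥ 3. -/

import Mathlib

/-!
Every allocation has welfare at most `n`, and cutting the path anywhere into a prefix for one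
agent and the suffix for another gives a connected allocation of welfare at least `1`, which
settles the case of welfare at most `n - 1/(nm)`. Above that threshold the total loss of `A` is
below `1/(nm)`, so an item worth at least `1/(nm)` to an agent lies in that agent's bundle. Some
item `g` is worth `1/m` to agent `0`, hence belongs to `A 0` and is worth less than `1/(nm)` to
agent `1`. The difference of the prefix values of agents `0` and `1` therefore jumps by more
than `2r`, `r = (n-1)/(2nm)`, at `g`, so at one of the two cuts next to `g` it is at least `r` in
absolute value, and the better of the two orders of that cut has welfare at least `1 + r`.
Finally `n ≤ (n - 1/(nm)) (1 + r)` for `n ≥ 3`.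
-/

def ConnB {V : Type*} (G : SimpleGraph V) (s : Finset V) : Prop :=
  s = ∅ ∨ (G.induce (s : Set V)).Connected

def IsAlloc {V : Type*} [Fintype V] [DecidableEq V] {n : ℕ} (A : Fin n → Finset V) : Prop :=
  (∀ i j : Fin n, i ≠ j → Disjoint (A i) (A j)) ∧ Finset.univ.biUnion A = Finset.univ

/-- The path on `m` vertices `0 — 1 — ⋯ — (m-1)`. -/
def pathGraph (m : ℕ) : SimpleGraph (Fin m) where
  Adj x y := x.val + 1 = y.val ∨ y.val + 1 = x.val
  symm := by constructor; rintro x y (h | h); exacts [Or.inr h, Or.inl h]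
  loopless := by constructor; rintro x (h | h) <;> omega

section Welfare

variable {ι V : Type*} [Fintype V]

def welfare [Fintype ι] (u : ι → V → ℝ) (A : ι → Finset V) : ℝ :=
  ∑ i, ∑ v ∈ A i, u i v

variable {u : ι → V → ℝ}

lemma sum_le_one_of_normalized (hu : ∀ i v, 0 ≤ u i v) (hnorm : ∀ i, ∑ v, u i v = 1)
    (i : ι) (s : Finset V) : ∑ v ∈ s, u i v ≤ 1 :=
  (Finset.sum_le_sum_of_subset_of_nonneg (Finset.subset_univ s) fun v _ _ => hu i v).trans_eq
    (hnorm i)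

lemma welfare_le_card [Fintype ι] (hu : ∀ i v, 0 ≤ u i v) (hnorm : ∀ i, ∑ v, u i v = 1)
    (A : ι → Finset V) : welfare u A ≤ Fintype.card ι := by
  refine (Finset.sum_le_sum fun i _ => sum_le_one_of_normalized hu hnorm i (A i)).trans_eq ?_
  simp

/-- `u i v` is at most agent `i`'s own loss `1 - ∑ w ∈ A i, u i w`, hence at most the total
loss `card ι - welfare u A`. -/
lemma lt_of_notMem_of_card_sub_lt_welfare [Fintype ι] [DecidableEq V] (hu : ∀ i v, 0 ≤ u i v)
    (hnorm : ∀ i, ∑ v, u i v = 1) {A : ι → Finset V} {ε : ℝ}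
    (hW : Fintype.card ι - ε < welfare u A) {i : ι} {v : V} (hv : v ∉ A i) : u i v < ε := by
  have hloss : 1 - ∑ w ∈ A i, u i w ≤ ∑ j, (1 - ∑ w ∈ A j, u j w) :=
    Finset.single_le_sum (f := fun j => 1 - ∑ w ∈ A j, u j w)
      (fun j _ => sub_nonneg.mpr (sum_le_one_of_normalized hu hnorm j (A j))) (Finset.mem_univ i)
  have hins : u i v + ∑ w ∈ A i, u i w ≤ 1 := by
    rw [← Finset.sum_insert hv]
    exact sum_le_one_of_normalized hu hnorm i _
  rw [Finset.sum_sub_distrib] at hloss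
  simp only [Finset.sum_const, Finset.card_univ, nsmul_eq_mul, mul_one] at hloss
  unfold welfare at hW
  linarith

end Welfare

lemma pathGraph_eq_hasse (m : ℕ) : pathGraph m = SimpleGraph.hasse (Fin m) := by
  ext u v
  exact SimpleGraph.pathGraph_adj.symm

lemma connB_pathGraph_of_ordConnected {m : ℕ} (s : Finset (Fin m))
    (hs : (s : Set (Fin m)).OrdConnected) : ConnB (pathGraph m) s := by
  rcases s.eq_empty_or_nonempty with rfl | ⟨x, hx⟩
  · exact Or.inl rfl
  have : Nonempty (s : Set (Fin m)) := ⟨⟨x, hx⟩⟩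
  refine Or.inr ⟨(SimpleGraph.hasse_preconnected_of_succ _).mono ?_⟩
  rw [pathGraph_eq_hasse]
  have hrange : (Set.range (OrderEmbedding.subtype (· ∈ (s : Set (Fin m))))).OrdConnected := by
    simpa using hs
  rintro a b (hab | hba)
  · exact Or.inl (hab.image _ hrange)
  · exact Or.inr (hba.image _ hrange)

def pathPrefix (m c : ℕ) : Finset (Fin m) := {v | (v : ℕ) < c}

section PathPrefix

variable {m : ℕ}

@[simp]
lemma mem_pathPrefix {c : ℕ} {v : Fin m} : v ∈ pathPrefix m c ↔ (v : ℕ) < c := by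
  simp [pathPrefix]

lemma ordConnected_pathPrefix (c : ℕ) : (pathPrefix m c : Set (Fin m)).OrdConnected :=
  ⟨fun x _ y hy z hz => by
    simp only [Finset.mem_coe, mem_pathPrefix, Set.mem_Icc, Fin.le_def] at *; omega⟩

lemma ordConnected_compl_pathPrefix (c : ℕ) :
    (((pathPrefix m c)ᶜ : Finset (Fin m)) : Set (Fin m)).OrdConnected :=
  ⟨fun x hx y _ z hz => by
    simp only [Finset.coe_compl, Set.mem_compl_iff, Finset.mem_coe, mem_pathPrefix, Set.mem_Icc,
      Fin.le_def] at *
    omega⟩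

lemma pathPrefix_succ (g : Fin m) : pathPrefix m (g + 1) = insert g (pathPrefix m g) := by
  ext v
  simp only [mem_pathPrefix, Finset.mem_insert, Fin.ext_iff]
  omega

/-- The prefix sums at `g` and `g + 1` differ by `f g`, so they cannot both lie in `(-r, r)`. -/
lemma exists_le_abs_sum_pathPrefix {f : Fin m → ℝ} {g : Fin m} {r : ℝ} (hg : 2 * r ≤ f g) :
    ∃ c, r ≤ |∑ v ∈ pathPrefix m c, f v| := by
  by_contra! h
  have hjump : ∑ v ∈ pathPrefix m (g + 1), f v = f g + ∑ v ∈ pathPrefix m g, f v := by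
    rw [pathPrefix_succ, Finset.sum_insert (by simp)]
  have h₀ := abs_lt.mp (h g)
  have h₁ := abs_lt.mp (h (g + 1))
  linarith

end PathPrefix

section SplitAlloc

variable {m n : ℕ}

def splitAlloc (i j : Fin n) (c : ℕ) : Fin n → Finset (Fin m) :=
  fun k => if k = i then pathPrefix m c else if k = j then (pathPrefix m c)ᶜ else ∅

variable {i j : Fin n}

lemma isAlloc_splitAlloc (hij : i ≠ j) (c : ℕ) : IsAlloc (splitAlloc (m := m) i j c) := by
  refine ⟨fun k l hkl => ?_, ?_⟩
  · unfold splitAlloc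
    split_ifs <;> first | exact disjoint_compl_right | exact disjoint_compl_left | simp_all
  · ext v
    by_cases hv : (v : ℕ) < c
    · simpa using ⟨i, by simp [splitAlloc, hv]⟩
    · simpa using ⟨j, by simp [splitAlloc, hij.symm, hv]⟩

lemma connB_splitAlloc (c : ℕ) (k : Fin n) :
    ConnB (pathGraph m) (splitAlloc i j c k) := by
  unfold splitAlloc
  split_ifs
  · exact connB_pathGraph_of_ordConnected _ (ordConnected_pathPrefix c)
  · exact connB_pathGraph_of_ordConnected _ (ordConnected_compl_pathPrefix c)
  · exact Or.inl rfl

lemma welfare_splitAlloc (u : Fin n → Fin m → ℝ) (hnorm : ∀ i, ∑ v, u i v = 1)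
    (hij : i ≠ j) (c : ℕ) :
    welfare u (splitAlloc i j c) = 1 + ∑ v ∈ pathPrefix m c, (u i v - u j v) := by
  rw [welfare, Fintype.sum_eq_add i j hij fun k hk => by simp [splitAlloc, hk.1, hk.2]]
  have hj := Finset.sum_compl_add_sum (pathPrefix m c) (u j)
  simp only [splitAlloc, if_pos, if_neg hij.symm, Finset.sum_sub_distrib, hnorm] at hj ⊢
  linarith

/-- Cut the path at `c` and hand the two pieces to `i` and `j` in the better order. -/
lemma exists_connected_alloc_one_add_abs_le_welfare (u : Fin n → Fin m → ℝ)
    (hnorm : ∀ i, ∑ v, u i v = 1) (hij : i ≠ j) (c : ℕ) :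
    ∃ B : Fin n → Finset (Fin m), IsAlloc B ∧ (∀ k, ConnB (pathGraph m) (B k)) ∧
      1 + |∑ v ∈ pathPrefix m c, (u i v - u j v)| ≤ welfare u B := by
  rcases abs_cases (∑ v ∈ pathPrefix m c, (u i v - u j v)) with ⟨habs, -⟩ | ⟨habs, -⟩
  · refine ⟨splitAlloc i j c, isAlloc_splitAlloc hij c, connB_splitAlloc c, ?_⟩
    rw [welfare_splitAlloc u hnorm hij, habs]
  · refine ⟨splitAlloc j i c, isAlloc_splitAlloc hij.symm c, connB_splitAlloc c, ?_⟩
    rw [welfare_splitAlloc u hnorm hij.symm, habs, ← Finset.sum_neg_distrib]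
    simp

end SplitAlloc

lemma exists_connected_alloc_welfare_ge_of_welfare_gt {m n : ℕ} (hm : 1 ≤ m)
    {u : Fin n → Fin m → ℝ} (hu : ∀ i v, 0 ≤ u i v) (hnorm : ∀ i, ∑ v, u i v = 1)
    {A : Fin n → Finset (Fin m)} (hA : IsAlloc A) {i j : Fin n} (hij : i ≠ j)
    (hW : (n : ℝ) - 1 / (n * m) < welfare u A) :
    ∃ B : Fin n → Finset (Fin m), IsAlloc B ∧ (∀ k, ConnB (pathGraph m) (B k)) ∧
      1 + ((n : ℝ) - 1) / (2 * n * m) ≤ welfare u B := by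
  have hmR : (1 : ℝ) ≤ m := by exact_mod_cast hm
  have hnR : (1 : ℝ) ≤ n := by exact_mod_cast Fin.pos i
  have hsmall : ∀ k v, v ∉ A k → u k v < 1 / (n * m) := fun k v hv =>
    lt_of_notMem_of_card_sub_lt_welfare hu hnorm (by simpa using hW) hv
  obtain ⟨g, -, hg⟩ : ∃ g ∈ Finset.univ, 1 / (m : ℝ) ≤ u i g := by
    refine Finset.exists_le_of_sum_le ⟨⟨0, hm⟩, Finset.mem_univ _⟩ ?_
    simp [hnorm, (by positivity : (m : ℝ) ≠ 0)]
  have hgi : g ∈ A i := by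
    by_contra hg'
    have : 1 / ((n : ℝ) * m) ≤ 1 / m := by gcongr; nlinarith
    linarith [hsmall i g hg']
  have hgj : u j g < 1 / (n * m) := hsmall j g (Finset.disjoint_left.mp (hA.1 i j hij) hgi)
  have hgap : 2 * (((n : ℝ) - 1) / (2 * n * m)) ≤ u i g - u j g := by
    have : 2 * (((n : ℝ) - 1) / (2 * n * m)) = 1 / m - 1 / (n * m) := by field_simp
    linarith
  obtain ⟨c, hc⟩ := exists_le_abs_sum_pathPrefix (f := fun v => u i v - u j v) hgap
  obtain ⟨B, hB, hBconn, hBw⟩ := exists_connected_alloc_one_add_abs_le_welfare u hnorm hij c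
  exact ⟨B, hB, hBconn, by linarith⟩

/-- Cleared of denominators this is `2n³m² ≤ (n²m − 1)(2nm + n − 1)`. -/
lemma le_sub_one_div_mul_one_add {n m : ℝ} (hn : 3 ≤ n) (hm : 1 ≤ m) :
    n ≤ (n - 1 / (n * m)) * (1 + (n - 1) / (2 * n * m)) := by
  have hn0 : n ≠ 0 := by positivity
  have hm0 : m ≠ 0 := by positivity
  rw [← sub_nonneg]
  have heq : (n - 1 / (n * m)) * (1 + (n - 1) / (2 * n * m)) - n =
      ((n ^ 2 * m - 1) * (2 * n * m + n - 1) - 2 * n ^ 3 * m ^ 2) / (2 * n ^ 2 * m ^ 2) := by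
    field_simp
    ring
  rw [heq]
  apply div_nonneg _ (by positivity)
  have hnm : n ≤ n * m := le_mul_of_one_le_right (by linarith) hm
  have hquad : 1 ≤ (n - 2) * (n + 1) := by nlinarith
  nlinarith [mul_le_mul hnm hquad zero_le_one (by linarith)]

/-- for a path on `m ≥ 1` vertices and `n ≥ 3` agents with normalized
nonnegative utilities, the utilitarian price of connectivity is at most `n − 1/(nm)`: the
welfare of any allocation is matched up to that factor by a connected allocation. -/
theorem util_poc_path_upper (m n : ℕ) (hm : 1 ≤ m) (hn : 3 ≤ n)
    (u : Fin n → Fin m → ℝ) (hu : ∀ i v, 0 ≤ u i v) (hnorm : ∀ i, ∑ v, u i v = 1)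
    (A : Fin n → Finset (Fin m)) (hA : IsAlloc A) :
    ∃ B : Fin n → Finset (Fin m), IsAlloc B ∧ (∀ i, ConnB (pathGraph m) (B i)) ∧
      ∑ i, ∑ v ∈ A i, u i v ≤
        ((n : ℝ) - 1 / ((n : ℝ) * m)) * ∑ i, ∑ v ∈ B i, u i v := by
  have hmR : (1 : ℝ) ≤ m := by exact_mod_cast hm
  have hnR : (3 : ℝ) ≤ n := by exact_mod_cast hn
  have hfactor : 0 ≤ (n : ℝ) - 1 / (n * m) := by
    have : 1 / ((n : ℝ) * m) ≤ 1 := by rw [div_le_one (by positivity)]; nlinarith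
    linarith
  have hij : (⟨0, by omega⟩ : Fin n) ≠ ⟨1, by omega⟩ := by simp
  by_cases hlow : welfare u A ≤ n - 1 / (n * m)
  · obtain ⟨B, hB, hBconn, hBw⟩ := exists_connected_alloc_one_add_abs_le_welfare u hnorm hij 0
    exact ⟨B, hB, hBconn, hlow.trans <| le_mul_of_one_le_right hfactor <|
      (le_add_of_nonneg_right (abs_nonneg _)).trans hBw⟩
  · obtain ⟨B, hB, hBconn, hBw⟩ :=
      exists_connected_alloc_welfare_ge_of_welfare_gt hm hu hnorm hA hij (not_le.mp hlow)
    refine ⟨B, hB, hBconn, ?_⟩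
    calc welfare u A ≤ n := by simpa using welfare_le_card hu hnorm A
      _ ≤ (n - 1 / (n * m)) * (1 + (n - 1) / (2 * n * m)) := le_sub_one_div_mul_one_add hnR hmR
      _ ≤ (n - 1 / (n * m)) * welfare u B := mul_le_mul_of_nonneg_left hBw hfactor
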